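/- arXiv:1111.4603 — 3 statements merged into one kernel-verified Lean document; each statement's English description precedes it below -/
import Mathlib

section
/- For every nonzero complex number w with Re(w) ≥ 0, one has |(e^{-w} - 1)/w| ≥ 1 - |w|/2. -/
/-!
Writing `(1 - e^{-w}) / w = ∫₀¹ e^{-t w} dt`, it suffices that this integral is within `‖w‖ / 2`
of `1`. Since `‖exp'‖ = ‖exp‖ ≤ 1` on the closed left half-plane, the mean value inequality gives
`‖e^{-t w} - 1‖ ≤ t ‖w‖`, and `∫₀¹ t ‖w‖ dt = ‖w‖ / 2`.
-/

open Complex intervalIntegral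

theorem Complex.norm_exp_sub_one_le_norm_of_re_nonpos {z : ℂ} (hz : z.re ≤ 0) :
    ‖exp z - 1‖ ≤ ‖z‖ := by
  have hbound : ∀ u ∈ {u : ℂ | u.re ≤ 0}, ‖deriv exp u‖ ≤ 1 := fun u hu => by
    simpa [Complex.norm_exp] using hu
  simpa using (convex_halfSpace_re_le 0).norm_image_sub_le_of_norm_deriv_le
    (fun u _ => differentiableAt_exp) hbound (by simp : (0 : ℂ).re ≤ 0) hz

theorem Complex.norm_integral_exp_mul_sub_one_le {z : ℂ} (hz : z.re ≤ 0) :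
    ‖∫ x in (0 : ℝ)..1, (exp (z * x) - 1)‖ ≤ ‖z‖ / 2 := by
  have hpointwise : ∀ x ∈ Set.Ioc (0 : ℝ) 1, ‖exp (z * x) - 1‖ ≤ ‖z‖ * x := fun x hx => by
    have hre : (z * x).re ≤ 0 := by
      simpa using mul_nonpos_of_nonpos_of_nonneg hz hx.1.le
    simpa [abs_of_pos hx.1] using norm_exp_sub_one_le_norm_of_re_nonpos hre
  calc ‖∫ x in (0 : ℝ)..1, (exp (z * x) - 1)‖
      ≤ ∫ x in (0 : ℝ)..1, ‖z‖ * x :=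
        norm_integral_le_of_norm_le zero_le_one (.of_forall hpointwise)
          ((by fun_prop : Continuous fun x : ℝ => ‖z‖ * x).intervalIntegrable _ _)
    _ = ‖z‖ / 2 := by rw [intervalIntegral.integral_const_mul, integral_id]; ring

theorem exp_quotient_lower_bound (w : ℂ) (hw0 : w ≠ 0) (hw : 0 ≤ w.re) :
    1 - ‖w‖ / 2 ≤ ‖(Complex.exp (-w) - 1) / w‖ := by
  set I := ∫ x in (0 : ℝ)..1, (exp (-w * x) - 1) with hI_def
  have hquot : (exp (-w) - 1) / w = -(I + 1) := by
    have hcont : Continuous fun x : ℝ => exp (-w * x) := by fun_prop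
    rw [hI_def, integral_sub (hcont.intervalIntegrable _ _) intervalIntegrable_const,
      integral_exp_mul_complex (neg_ne_zero.mpr hw0)]
    field_simp
    simp
  have hI : ‖I‖ ≤ ‖-w‖ / 2 := norm_integral_exp_mul_sub_one_le (by simpa using hw)
  rw [hquot, norm_neg]
  linarith [norm_le_add_norm_add' I 1, norm_one (α := ℂ), norm_neg w]
end

section
/- Let μ be a nonnegative Borel measure on the closed right half-plane, 1 < p ≤ 2, p' = p/(p-1), and suppose there is a constant C such that ‖𝓛u‖_{L^{p'}((closed right half-plane), dμ)} ≤ C‖u‖_{L^p(0,∞)} for all u ∈ L^p(0,∞). Then μ is a Carleson measure: there is a constant N (one may take N = 2^{3/2} p' C^{p'}) such that μ(Q_{a,h}) ≤ N·h for all a ∈ ℝ and h > 0, where Q_{a,h} = {z : Im z ∈ [a,a+h], Re z ∈ [0,h]}. -/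
open MeasureTheory Set Complex
open scoped ENNReal

/-!
Test the Hardy–Young type inequality on the modulated box `u(t) = 1_{(0,T]}(t) e^{iat}`, whose
`L^p` norm is `T^{1/p}`. Its Laplace transform at `z` is `∫₀^T e^{-(z - ia)t} dt`, and for `z` in
the square `Q_{a,h}` we have `|z - ia| ≤ √2 h`, so `|1 - e^{-(z-ia)t}| ≤ √2 h t` gives
`|𝓛u(z)| ≥ T - √2 h T²/2`. With `T = √2 / (p' h)` this is `T / p` on all of `Q_{a,h}`, and
Chebyshev's inequality in `L^{p'}(μ)` yields `μ(Q_{a,h}) ≤ (C p)^{p'} / T`. Finally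
`p^{p'} ≤ 4` for `1 < p ≤ 2`, by convexity of `x log x` on `[1, 2]`.
-/

lemma Real.HolderConjugate.rpow_le_four {p q : ℝ} (hpq : p.HolderConjugate q) (hp2 : p ≤ 2) :
    p ^ q ≤ 4 := by
  have hp1 := hpq.sub_one_pos
  have hchord : p * Real.log p ≤ (p - 1) * (2 * Real.log 2) := by
    have := Real.convexOn_mul_log.2 (mem_Ici.2 zero_le_one) (mem_Ici.2 zero_le_two)
      (show (0:ℝ) ≤ 2 - p by linarith) hp1.le (show 2 - p + (p - 1) = 1 by ring)
    simpa [show (2 - p) + (p - 1) * 2 = p by ring] using this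
  have hexp : q * Real.log p ≤ Real.log 4 := by
    rw [hpq.conjugate_eq, div_mul_eq_mul_div, div_le_iff₀ hp1,
      show (4 : ℝ) = 2 ^ 2 by norm_num, Real.log_pow]
    push_cast
    linarith
  calc p ^ q = Real.exp (q * Real.log p) := by rw [Real.rpow_def_of_pos hpq.pos, mul_comm]
    _ ≤ Real.exp (Real.log 4) := Real.exp_le_exp.2 hexp
    _ = 4 := Real.exp_log (by norm_num)

def carlesonSquare (a h : ℝ) : Set ℂ := {z : ℂ | z.im ∈ Icc a (a + h) ∧ z.re ∈ Icc 0 h}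

lemma measurableSet_carlesonSquare (a h : ℝ) : MeasurableSet (carlesonSquare a h) :=
  (measurable_im measurableSet_Icc).inter (measurable_re measurableSet_Icc)

lemma norm_sub_mul_I_le_of_mem_carlesonSquare {a h : ℝ} {z : ℂ} (hz : z ∈ carlesonSquare a h) :
    ‖z - a * I‖ ≤ √2 * h := by
  obtain ⟨⟨him₁, him₂⟩, hre₁, hre₂⟩ := hz
  refine (norm_le_sqrt_two_mul_max _).trans (mul_le_mul_of_nonneg_left ?_ (by positivity))
  have hre : (z - a * I).re = z.re := by simp
  have him : (z - a * I).im = z.im - a := by simp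
  rw [hre, him]
  exact max_le (abs_le.2 ⟨by linarith, hre₂⟩) (abs_le.2 ⟨by linarith, by linarith⟩)

lemma Complex.norm_one_sub_exp_neg_le {v : ℂ} (hv : 0 ≤ v.re) : ‖1 - exp (-v)‖ ≤ ‖v‖ := by
  have hderiv : ∀ x ∈ Icc (0:ℝ) 1, HasDerivWithinAt (fun t : ℝ => exp (-(t * v)))
      (exp (-(x * v)) * -v) (Icc 0 1) x := fun x _ =>
    ((((hasDerivAt_id (x : ℂ)).comp_ofReal).mul_const v).neg.cexp.congr_deriv
      (by simp)).hasDerivWithinAt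
  have hbound : ∀ x ∈ Icc (0:ℝ) 1, ‖exp (-(x * v)) * -v‖ ≤ ‖v‖ := by
    intro x hx
    rw [norm_mul, norm_neg, norm_exp]
    refine mul_le_of_le_one_left (norm_nonneg v) (Real.exp_le_one_iff.2 ?_)
    simpa using mul_nonneg hx.1 hv
  simpa [norm_sub_rev] using (convex_Icc (0:ℝ) 1).norm_image_sub_le_of_norm_hasDerivWithin_le
    hderiv hbound (left_mem_Icc.2 zero_le_one) (right_mem_Icc.2 zero_le_one)

lemma norm_intervalIntegral_exp_neg_mul_ge {w : ℂ} (hw : 0 ≤ w.re) {T : ℝ} (hT : 0 ≤ T) :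
    T - ‖w‖ * T ^ 2 / 2 ≤ ‖∫ t in (0:ℝ)..T, exp (-w * t)‖ := by
  have hcont : Continuous fun t : ℝ => exp (-w * t) := by fun_prop
  have hsplit : ∫ t in (0:ℝ)..T, exp (-w * t) = T - ∫ t in (0:ℝ)..T, (1 - exp (-w * t)) := by
    rw [intervalIntegral.integral_sub intervalIntegrable_const (hcont.intervalIntegrable _ _)]
    simp
  have herror : ‖∫ t in (0:ℝ)..T, (1 - exp (-w * t))‖ ≤ ‖w‖ * T ^ 2 / 2 := by
    have hle : ∀ t ∈ Ioc (0:ℝ) T, ‖1 - exp (-w * t)‖ ≤ ‖w‖ * t := fun t ht => by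
      have hwt : 0 ≤ (w * t).re := by simpa using mul_nonneg hw ht.1.le
      simpa [abs_of_pos ht.1] using norm_one_sub_exp_neg_le hwt
    calc _ ≤ ∫ t in (0:ℝ)..T, ‖w‖ * t :=
          intervalIntegral.norm_integral_le_of_norm_le hT (.of_forall hle)
            ((by fun_prop : Continuous fun t : ℝ => ‖w‖ * t).intervalIntegrable _ _)
      _ = ‖w‖ * T ^ 2 / 2 := by rw [intervalIntegral.integral_const_mul, integral_id]; ring
  calc T - ‖w‖ * T ^ 2 / 2 ≤ ‖(T : ℂ)‖ - ‖∫ t in (0:ℝ)..T, (1 - exp (-w * t))‖ := by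
        rw [norm_real, Real.norm_of_nonneg hT]; linarith
    _ ≤ _ := hsplit ▸ norm_sub_norm_le _ _

noncomputable def laplace (u : ℝ → ℂ) (z : ℂ) : ℂ := ∫ t in Ioi (0:ℝ), u t * exp (-z * t)

lemma laplace_mul_exp_mul_I (u : ℝ → ℂ) (a : ℝ) (z : ℂ) :
    laplace (fun t => u t * exp (a * t * I)) z = laplace u (z - a * I) := by
  unfold laplace
  congr 1 with t
  rw [mul_assoc, ← exp_add]
  ring_nf

lemma laplace_indicator_Ioc {T : ℝ} (hT : 0 ≤ T) (w : ℂ) :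
    laplace ((Ioc 0 T).indicator 1) w = ∫ t in (0:ℝ)..T, exp (-w * t) := by
  have hmul : (fun t : ℝ => (Ioc 0 T).indicator 1 t * exp (-w * t)) =
      (Ioc 0 T).indicator fun t => exp (-w * t) := by
    ext t; by_cases ht : t ∈ Ioc 0 T <;> simp [ht]
  rw [laplace, hmul, integral_indicator measurableSet_Ioc,
    Measure.restrict_restrict measurableSet_Ioc, inter_eq_self_of_subset_left Ioc_subset_Ioi_self,
    intervalIntegral.integral_of_le hT]

noncomputable def boxWave (a T : ℝ) : ℝ → ℂ :=
  fun t => (Ioc 0 T).indicator 1 t * exp (a * t * I)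

lemma norm_boxWave (a T t : ℝ) : ‖boxWave a T t‖ = (Ioc 0 T).indicator 1 t := by
  by_cases ht : t ∈ Ioc 0 T <;> simp [boxWave, ht, norm_exp]

lemma eLpNorm_boxWave (a T : ℝ) {p : ℝ≥0∞} (hp0 : p ≠ 0) (hp : p ≠ ∞) :
    eLpNorm (boxWave a T) p (volume.restrict (Ioi 0)) = ENNReal.ofReal T ^ (1 / p.toReal) := by
  rw [eLpNorm_congr_norm_ae (g := (Ioc 0 T).indicator fun _ => (1:ℝ)) (.of_forall fun t => by
      rw [norm_boxWave]; by_cases ht : t ∈ Ioc 0 T <;> simp [ht]),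
    eLpNorm_indicator_const measurableSet_Ioc hp0 hp, Measure.restrict_apply measurableSet_Ioc,
    inter_eq_self_of_subset_left Ioc_subset_Ioi_self, Real.volume_Ioc]
  simp

lemma memLp_boxWave (a T : ℝ) {p : ℝ≥0∞} (hp0 : p ≠ 0) (hp : p ≠ ∞) :
    MemLp (boxWave a T) p (volume.restrict (Ioi 0)) := by
  refine ⟨((measurable_one.indicator measurableSet_Ioc).mul (by fun_prop)).aestronglyMeasurable, ?_⟩
  rw [eLpNorm_boxWave a T hp0 hp]
  exact ENNReal.rpow_lt_top_of_nonneg (by positivity) ENNReal.ofReal_ne_top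

lemma norm_laplace_boxWave_ge {a h T : ℝ} (hT : 0 ≤ T) {z : ℂ} (hz : z ∈ carlesonSquare a h) :
    T - √2 * h * T ^ 2 / 2 ≤ ‖laplace (boxWave a T) z‖ := by
  have hre : 0 ≤ (z - a * I).re := by simpa using hz.2.1
  unfold boxWave
  rw [laplace_mul_exp_mul_I, laplace_indicator_Ioc hT]
  refine le_trans ?_ (norm_intervalIntegral_exp_neg_mul_ge hre hT)
  gcongr
  exact norm_sub_mul_I_le_of_mem_carlesonSquare hz

lemma measure_le_of_le_norm_of_eLpNorm_le {α E : Type*} [MeasurableSpace α]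
    [NormedAddCommGroup E] {μ : Measure α} {f : α → E} {s : Set α} (hs : MeasurableSet s)
    {m q K : ℝ} (hm : 0 < m) (hq : 0 < q) (hK : 0 ≤ K) (hfs : ∀ x ∈ s, m ≤ ‖f x‖)
    (hf : eLpNorm f (ENNReal.ofReal q) μ ≤ ENNReal.ofReal K) :
    μ s ≤ ENNReal.ofReal ((K / m) ^ q) := by
  have hind : ENNReal.ofReal m * μ s ^ (1 / q) ≤ ENNReal.ofReal K := by
    have hmono :
        eLpNorm (s.indicator fun _ => m) (ENNReal.ofReal q) μ ≤ eLpNorm f (ENNReal.ofReal q) μ :=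
      eLpNorm_mono fun x => by
        by_cases hx : x ∈ s
        · simpa [hx, abs_of_pos hm] using hfs x hx
        · simp [hx]
    rw [eLpNorm_indicator_const hs (by simpa using hq) ENNReal.ofReal_ne_top,
      ENNReal.toReal_ofReal hq.le, Real.enorm_of_nonneg hm.le] at hmono
    exact hmono.trans hf
  have hroot : μ s ^ (1 / q) ≤ ENNReal.ofReal (K / m) := by
    rw [ENNReal.ofReal_div_of_pos hm, ENNReal.le_div_iff_mul_le (.inl (by simpa using hm))
      (.inl ENNReal.ofReal_ne_top), mul_comm]
    exact hind
  calc μ s = (μ s ^ (1 / q)) ^ q := by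
        rw [← ENNReal.rpow_mul, one_div_mul_cancel hq.ne', ENNReal.rpow_one]
    _ ≤ ENNReal.ofReal (K / m) ^ q := ENNReal.rpow_le_rpow hroot hq.le
    _ = ENNReal.ofReal ((K / m) ^ q) := ENNReal.ofReal_rpow_of_nonneg (by positivity) hq.le

lemma Real.HolderConjugate.rpow_mul_rpow_div_div {p q : ℝ} (hpq : p.HolderConjugate q) {C T : ℝ}
    (hC : 0 ≤ C) (hT : 0 < T) : (C * T ^ (1 / p) / (T / p)) ^ q = C ^ q * p ^ q / T := by
  have hscale : C * T ^ (1 / p) / (T / p) = C * p * T ^ (-(1 / q)) := by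
    rw [one_div, one_div, ← hpq.inv_sub_one, Real.rpow_sub_one hT.ne']
    field_simp
  rw [hscale, Real.mul_rpow (mul_nonneg hC hpq.nonneg) (Real.rpow_nonneg hT.le _),
    Real.mul_rpow hC hpq.nonneg, ← Real.rpow_mul hT.le, neg_mul,
    one_div_mul_cancel hpq.symm.ne_zero, Real.rpow_neg_one]
  ring

/-- The box length `T = ε / h` with `ε = √2 / p'` is chosen so that the quadratic error term
`√2 h T² / 2` is `T / p'`. -/
lemma div_le_norm_laplace_boxWave {p q : ℝ} (hpq : p.HolderConjugate q) {a h : ℝ} (hh : 0 < h)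
    {z : ℂ} (hz : z ∈ carlesonSquare a h) :
    √2 / (q * h) / p ≤ ‖laplace (boxWave a (√2 / (q * h))) z‖ := by
  have hq := hpq.symm.pos
  refine le_of_eq_of_le ?_ (norm_laplace_boxWave_ge (by positivity) hz)
  have hquad : √2 * h * (√2 / (q * h)) ^ 2 / 2 = √2 / (q * h) / q := by
    field_simp
    exact Real.sq_sqrt zero_le_two
  rw [hquad, div_eq_mul_inv _ p, div_eq_mul_inv _ q, ← hpq.one_sub_inv]
  ring

lemma Real.HolderConjugate.rpow_mul_div_le {p q : ℝ} (hpq : p.HolderConjugate q) (hp2 : p ≤ 2)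
    {C h : ℝ} (hC : 0 ≤ C) (hh : 0 < h) :
    C ^ q * p ^ q / (√2 / (q * h)) ≤ 2 ^ ((3:ℝ) / 2) * q * C ^ q * h := by
  have hq := hpq.symm.pos
  have hsqrt2 : (2:ℝ) ^ ((3:ℝ) / 2) = 2 * √2 := by
    rw [Real.sqrt_eq_rpow, ← Real.rpow_one_add' zero_le_two (by norm_num)]
    norm_num
  calc C ^ q * p ^ q / (√2 / (q * h)) = p ^ q * (q * C ^ q * h) / √2 := by field_simp
    _ ≤ 4 * (q * C ^ q * h) / √2 := by gcongr; exact hpq.rpow_le_four hp2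
    _ = 2 ^ ((3:ℝ) / 2) * q * C ^ q * h := by
        rw [hsqrt2]; field_simp; rw [Real.sq_sqrt zero_le_two]; ring

theorem HY_implies_Carleson_general (μ : Measure ℂ) (p p' C : ℝ)
    (hp : 1 < p) (hp2 : p ≤ 2) (hp' : p' = p / (p - 1)) (hC : 0 ≤ C)
    (hHY : ∀ u : ℝ → ℂ, MemLp u (ENNReal.ofReal p) (volume.restrict (Ioi (0:ℝ))) →
      eLpNorm (fun z : ℂ => ∫ t in Ioi (0:ℝ), u t * Complex.exp (-z * t))
          (ENNReal.ofReal p') μ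
        ≤ ENNReal.ofReal C * eLpNorm u (ENNReal.ofReal p) (volume.restrict (Ioi (0:ℝ)))) :
    ∀ a h : ℝ, 0 < h →
      μ {z : ℂ | z.im ∈ Icc a (a + h) ∧ z.re ∈ Icc 0 h}
        ≤ ENNReal.ofReal (2 ^ ((3:ℝ)/2) * p' * C ^ p' * h) := by
  intro a h hh
  have hpq : p.HolderConjugate p' := (Real.holderConjugate_iff_eq_conjExponent hp).2 hp'
  have hp0 : ENNReal.ofReal p ≠ 0 := by simpa using hpq.pos
  set T := √2 / (p' * h)
  have hT : 0 < T := by have := hpq.symm.pos; positivity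
  have hL : eLpNorm (laplace (boxWave a T)) (ENNReal.ofReal p') μ ≤
      ENNReal.ofReal (C * T ^ (1 / p)) := by
    have := hHY _ (memLp_boxWave a T hp0 ENNReal.ofReal_ne_top)
    rwa [eLpNorm_boxWave a T hp0 ENNReal.ofReal_ne_top, ENNReal.toReal_ofReal hpq.nonneg,
      ENNReal.ofReal_rpow_of_nonneg hT.le (by simpa using hpq.nonneg),
      ← ENNReal.ofReal_mul hC] at this
  calc μ (carlesonSquare a h) ≤ ENNReal.ofReal ((C * T ^ (1 / p) / (T / p)) ^ p') :=
        measure_le_of_le_norm_of_eLpNorm_le (measurableSet_carlesonSquare a h) (by positivity)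
          hpq.symm.pos (by positivity) (fun z hz => div_le_norm_laplace_boxWave hpq hh hz) hL
    _ ≤ _ := by
        rw [hpq.rpow_mul_rpow_div_div hC hT]
        exact ENNReal.ofReal_le_ofReal (hpq.rpow_mul_div_le hp2 hC hh)

theorem HY_implies_Carleson (μ : Measure ℂ) (p p' C : ℝ)
    (hp : 1 < p) (hp2 : p ≤ 2) (hp' : p' = p / (p - 1)) (hC : 0 ≤ C)
    (hsupp : μ {z : ℂ | z.re < 0} = 0)
    (hHY : ∀ u : ℝ → ℂ, MemLp u (ENNReal.ofReal p) (volume.restrict (Ioi (0:ℝ))) →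
      eLpNorm (fun z : ℂ => ∫ t in Ioi (0:ℝ), u t * Complex.exp (-z * t))
          (ENNReal.ofReal p') μ
        ≤ ENNReal.ofReal C * eLpNorm u (ENNReal.ofReal p) (volume.restrict (Ioi (0:ℝ)))) :
    ∀ a h : ℝ, 0 < h →
      μ {z : ℂ | z.im ∈ Icc a (a + h) ∧ z.re ∈ Icc 0 h}
        ≤ ENNReal.ofReal (2 ^ ((3:ℝ)/2) * p' * C ^ p' * h) :=
  HY_implies_Carleson_general μ p p' C hp hp2 hp' hC hHY
end

section
/- Let μ be a nonnegative Borel measure on the upper half-plane with Carleson norm N(μ) = sup_{a,h} μ(R_{a,h})/h < ∞, where R_{a,h} = {x+iy : a < x < a+h, 0 < y < h}. Let f ∈ L^1(ℝ) and let g(x+iy) = ∫ P_y(x−t) f(t) dt be its Poisson extension. Then for every λ > 0, μ({z : |g(z)| > λ}) ≤ 10 N(μ) ‖f‖_{L^1} / λ. -/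
/-!
The half-plane Poisson kernel is a superposition of indicators of intervals:
`P_y(s) = ∫_{|s|}^∞ q_y(r) dr` with `q_y = -∂P_y/∂r`. By Tonelli, if `F ≥ 0` has mass at most `r`
on every interval `(x - r, x + r)` with `r ≥ y`, then
`∫ P_y(x - t) F(t) dt ≤ ∫_0^∞ q_y(r) (r + y) dr = 1/2 + 1/π ≤ 1`.
Applied to `F = c |f|` with `c = (1/2 + 1/π)/λ`, every `z` with `|g z| > λ` gets a radius
`ρ z ≥ Im z` with `ρ z ≤ c ∫_{|t - Re z| < ρ z} |f|`. A Vitali subfamily of these intervals is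
disjoint, and the rectangles `(Re b - 3ρ b, Re b + 3ρ b) × (0, 2ρ b)` around it cover the level set;
each is a union of five Carleson boxes of side `2ρ b`, hence of measure at most `10 N ρ b`.
Summing over the disjoint intervals gives `μ {|g| > λ} ≤ 10 N c ‖f‖₁ ≤ 10 N ‖f‖₁ / λ`.
-/

open MeasureTheory Set Filter Metric
open scoped ENNReal Topology

theorem lintegral_Ioi_ofReal_deriv {g g' : ℝ → ℝ} {a l : ℝ}
    (hderiv : ∀ x ∈ Ici a, HasDerivAt g (g' x) x) (hg' : ∀ x ∈ Ioi a, 0 ≤ g' x)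
    (hg : Tendsto g atTop (𝓝 l)) :
    ∫⁻ x in Ioi a, ENNReal.ofReal (g' x) = ENNReal.ofReal (l - g a) := by
  rw [← ofReal_integral_eq_lintegral_ofReal (integrableOn_Ioi_deriv_of_nonneg' hderiv hg' hg)
    ((ae_restrict_iff' measurableSet_Ioi).2 (.of_forall hg')),
    integral_Ioi_of_hasDerivAt_of_nonneg' hderiv hg' hg]

theorem tendsto_mul_add_div_sq_add_sq_atTop (y : ℝ) :
    Tendsto (fun r : ℝ => y * (r + y) / (y ^ 2 + r ^ 2)) atTop (𝓝 0) := by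
  have hinv : Tendsto (fun r : ℝ => r⁻¹) atTop (𝓝 0) := tendsto_inv_atTop_zero
  have h := ((hinv.const_mul y).add ((hinv.pow 2).const_mul (y ^ 2))).div
    (((hinv.pow 2).const_mul (y ^ 2)).const_add 1) (by norm_num)
  simp only [mul_zero, add_zero, zero_div, ne_eq, OfNat.ofNat_ne_zero, not_false_eq_true,
    zero_pow] at h
  refine h.congr' ?_
  filter_upwards [eventually_gt_atTop 0] with r hr
  rw [Pi.div_apply]
  field_simp
  ring

theorem lintegral_lintegral_Ioi_dist_mul {α : Type*} [PseudoMetricSpace α] [MeasurableSpace α]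
    [OpensMeasurableSpace α] {ν : Measure α} [SFinite ν] (x : α) {Q : ℝ → ℝ≥0∞}
    (hQ : Measurable Q) {F : α → ℝ≥0∞} (hF : AEMeasurable F ν) :
    ∫⁻ t, (∫⁻ r in Ioi (dist t x), Q r) * F t ∂ν =
      ∫⁻ r in Ioi 0, Q r * ∫⁻ t in ball x r, F t ∂ν := by
  set E := {p : α × ℝ | dist p.1 x < p.2}
  have hE : MeasurableSet E := measurableSet_lt
    ((continuous_id.dist continuous_const).measurable.comp measurable_fst) measurable_snd
  have hmeas : AEMeasurable (E.indicator fun p => Q p.2 * F p.1)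
      (ν.prod (volume.restrict (Ioi 0))) :=
    ((hQ.comp measurable_snd).aemeasurable.mul
      (hF.comp_quasiMeasurePreserving Measure.quasiMeasurePreserving_fst)).indicator hE
  calc ∫⁻ t, (∫⁻ r in Ioi (dist t x), Q r) * F t ∂ν
      = ∫⁻ t, (∫⁻ r in Ioi 0, E.indicator (fun p => Q p.2 * F p.1) (t, r)) ∂ν := by
        refine lintegral_congr fun t => ?_
        change _ = ∫⁻ r in Ioi 0, (Ioi (dist t x)).indicator (fun r => Q r * F t) r
        rw [setLIntegral_indicator measurableSet_Ioi,
          inter_eq_left.2 (Ioi_subset_Ioi dist_nonneg), lintegral_mul_const _ hQ]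
    _ = ∫⁻ r in Ioi 0, ∫⁻ t, E.indicator (fun p => Q p.2 * F p.1) (t, r) ∂ν :=
        lintegral_lintegral_swap hmeas
    _ = ∫⁻ r in Ioi 0, Q r * ∫⁻ t in ball x r, F t ∂ν := by
        refine lintegral_congr fun r => ?_
        change ∫⁻ t, (ball x r).indicator (fun t => Q r * F t) t ∂ν = _
        rw [lintegral_indicator measurableSet_ball, lintegral_const_mul'' _ hF.restrict]

namespace HalfPlanePoisson

noncomputable def kernel (y t : ℝ) : ℝ := 1 / Real.pi * y / (y ^ 2 + t ^ 2)

/-- `-∂P_y/∂r`, so that `P_y(s) = ∫_{|s|}^∞ radialDensity y r dr`. -/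
noncomputable def radialDensity (y r : ℝ) : ℝ := 2 / Real.pi * y * r / (y ^ 2 + r ^ 2) ^ 2

theorem radialDensity_nonneg {y r : ℝ} (hy : 0 ≤ y) (hr : 0 ≤ r) :
    0 ≤ radialDensity y r := by
  unfold radialDensity
  positivity

theorem continuous_radialDensity {y : ℝ} (hy : 0 < y) :
    Continuous (radialDensity y) :=
  .div (by fun_prop) (by fun_prop) fun r => by positivity

theorem hasDerivAt_kernel {y : ℝ} (hy : 0 < y) (r : ℝ) :
    HasDerivAt (kernel y) (-radialDensity y r) r := by
  have hsq : HasDerivAt (fun r : ℝ => y ^ 2 + r ^ 2) (2 * r) r := by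
    simpa using (hasDerivAt_pow 2 r).const_add (y ^ 2)
  refine ((hasDerivAt_const r (1 / Real.pi * y)).div hsq (by positivity)).congr_deriv ?_
  unfold radialDensity
  field_simp
  ring

theorem tendsto_kernel_atTop (y : ℝ) : Tendsto (kernel y) atTop (𝓝 0) := by
  have h := (tendsto_atTop_add_const_left _ (y ^ 2)
    (tendsto_pow_atTop two_ne_zero)).inv_tendsto_atTop.const_mul
    (1 / Real.pi * y)
  rw [mul_zero] at h
  exact h.congr fun t => (div_eq_mul_inv _ _).symm

theorem lintegral_Ioi_abs_radialDensity {y : ℝ} (hy : 0 < y) (s : ℝ) :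
    ∫⁻ r in Ioi |s|, ENNReal.ofReal (radialDensity y r) =
      ENNReal.ofReal (kernel y s) := by
  have hderiv : ∀ r ∈ Ici |s|, HasDerivAt (-kernel y) (radialDensity y r) r :=
    fun r _ => (hasDerivAt_kernel hy r).neg.congr_deriv (neg_neg _)
  rw [lintegral_Ioi_ofReal_deriv hderiv
    (fun r hr => radialDensity_nonneg hy.le ((abs_nonneg s).trans hr.le))
    (neg_zero (G := ℝ) ▸ (tendsto_kernel_atTop y).neg)]
  simp [kernel, sq_abs]

theorem lintegral_Ioi_radialDensity_mul_add {y : ℝ} (hy : 0 < y) :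
    ∫⁻ r in Ioi 0, ENNReal.ofReal (radialDensity y r * (r + y)) =
      ENNReal.ofReal (1 / 2 + 1 / Real.pi) := by
  have hderiv : ∀ r ∈ Ici (0 : ℝ), HasDerivAt
      (fun r => 1 / Real.pi * (Real.arctan (r / y) - y * (r + y) / (y ^ 2 + r ^ 2)))
      (radialDensity y r * (r + y)) r := fun r _ => by
    have hsq : HasDerivAt (fun r : ℝ => y ^ 2 + r ^ 2) (2 * r) r := by
      simpa using (hasDerivAt_pow 2 r).const_add (y ^ 2)
    have harctan := (Real.hasDerivAt_arctan (r / y)).comp r ((hasDerivAt_id r).div_const y)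
    have hlin : HasDerivAt (fun r : ℝ => y * (r + y)) y r := by
      simpa using ((hasDerivAt_id r).add_const y).const_mul y
    refine ((harctan.sub (hlin.div hsq (by positivity))).const_mul (1 / Real.pi)).congr_deriv ?_
    unfold radialDensity
    field_simp
    ring
  have hlim : Tendsto (fun r => 1 / Real.pi * (Real.arctan (r / y) - y * (r + y) / (y ^ 2 + r ^ 2)))
      atTop (𝓝 (1 / Real.pi * (Real.pi / 2 - 0))) :=
    (((tendsto_nhds_of_tendsto_nhdsWithin Real.tendsto_arctan_atTop).comp
      (tendsto_id.atTop_div_const hy)).sub (tendsto_mul_add_div_sq_add_sq_atTop y)).const_mul _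
  rw [lintegral_Ioi_ofReal_deriv hderiv
    (fun r hr => mul_nonneg (radialDensity_nonneg hy.le hr.le) (by linarith [hr.out]))
    hlim]
  congr 1
  simp only [zero_div, Real.arctan_zero]
  field_simp
  ring

theorem lintegral_kernel_mul_le {y : ℝ} (hy : 0 < y) (x : ℝ) {F : ℝ → ℝ≥0∞} (hF : AEMeasurable F)
    (hball : ∀ r, y ≤ r → ∫⁻ t in ball x r, F t ≤ ENNReal.ofReal r) :
    ∫⁻ t, ENNReal.ofReal (kernel y (x - t)) * F t ≤ ENNReal.ofReal (1 / 2 + 1 / Real.pi) := by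
  have hball_add : ∀ r, 0 < r → ∫⁻ t in ball x r, F t ≤ ENNReal.ofReal (r + y) := by
    intro r hr
    rcases le_total y r with hyr | hry
    · exact (hball r hyr).trans (ENNReal.ofReal_le_ofReal (by linarith))
    · calc ∫⁻ t in ball x r, F t ≤ ∫⁻ t in ball x y, F t :=
            lintegral_mono_set (ball_subset_ball hry)
        _ ≤ ENNReal.ofReal (r + y) :=
            (hball y le_rfl).trans (ENNReal.ofReal_le_ofReal (by linarith))
  calc ∫⁻ t, ENNReal.ofReal (kernel y (x - t)) * F t
      = ∫⁻ t, (∫⁻ r in Ioi (dist t x), ENNReal.ofReal (radialDensity y r)) * F t := by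
        refine lintegral_congr fun t => ?_
        rw [Real.dist_eq, abs_sub_comm, lintegral_Ioi_abs_radialDensity hy]
    _ = ∫⁻ r in Ioi 0, ENNReal.ofReal (radialDensity y r) * ∫⁻ t in ball x r, F t :=
        lintegral_lintegral_Ioi_dist_mul x
          (continuous_radialDensity hy).measurable.ennreal_ofReal hF
    _ ≤ ∫⁻ r in Ioi 0, ENNReal.ofReal (radialDensity y r * (r + y)) := by
        refine setLIntegral_mono' measurableSet_Ioi fun r hr => ?_
        rw [ENNReal.ofReal_mul (radialDensity_nonneg hy.le hr.out.le)]
        gcongr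
        exact hball_add r hr
    _ = ENNReal.ofReal (1 / 2 + 1 / Real.pi) := lintegral_Ioi_radialDensity_mul_add hy

theorem exists_lt_lintegral_ball_of_lt_enorm {E : Type*} [NormedAddCommGroup E] [NormedSpace ℝ E]
    {f : ℝ → E} (hf : AEStronglyMeasurable f) {y : ℝ} (hy : 0 < y) (x : ℝ) {c : ℝ≥0∞}
    (hc : c ≠ ∞)
    (hlt : ENNReal.ofReal (1 / 2 + 1 / Real.pi) < c * ‖∫ t, kernel y (x - t) • f t‖ₑ) :
    ∃ r, y ≤ r ∧ ENNReal.ofReal r < ∫⁻ t in ball x r, c * ‖f t‖ₑ := by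
  by_contra! hsmall
  refine (lintegral_kernel_mul_le hy x (hf.enorm.const_mul c) hsmall).not_gt (hlt.trans_le ?_)
  calc c * ‖∫ t, kernel y (x - t) • f t‖ₑ
      ≤ c * ∫⁻ t, ENNReal.ofReal (kernel y (x - t)) * ‖f t‖ₑ := by
        gcongr
        refine (enorm_integral_le_lintegral_enorm _).trans_eq (lintegral_congr fun t => ?_)
        rw [enorm_smul, Real.enorm_of_nonneg (by unfold kernel; positivity)]
    _ = ∫⁻ t, ENNReal.ofReal (kernel y (x - t)) * (c * ‖f t‖ₑ) := by
        simp_rw [mul_left_comm _ c]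
        exact (lintegral_const_mul' _ _ hc).symm

end HalfPlanePoisson

theorem exists_disjoint_subfamily_near {ι : Type*} (S : Set ι) (c ρ : ι → ℝ)
    (hρ : ∀ i ∈ S, 0 < ρ i) {R : ℝ} (hR : ∀ i ∈ S, ρ i ≤ R) :
    ∃ u ⊆ S, u.Countable ∧ u.PairwiseDisjoint (fun i => ball (c i) (ρ i)) ∧
      ∀ i ∈ S, ∃ b ∈ u, |c i - c b| < 3 * ρ b ∧ ρ i < 2 * ρ b := by
  -- the enlargement factor `3 / 2 < 2` is what makes `ρ i < 2 * ρ b` strict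
  obtain ⟨u, huS, hdisj, hnear⟩ := Vitali.exists_disjoint_subfamily_covering_enlargement
    (fun i => ball (c i) (ρ i)) S ρ (3 / 2) (by norm_num) (fun i hi => (hρ i hi).le) R hR
    (fun i hi => nonempty_ball.2 (hρ i hi))
  refine ⟨u, huS, hdisj.countable_of_isOpen (fun _ _ => isOpen_ball)
    (fun b hb => nonempty_ball.2 (hρ b (huS hb))), hdisj, fun i hi => ?_⟩
  obtain ⟨b, hb, ⟨w, hwi, hwb⟩, hle⟩ := hnear i hi
  have hρb := hρ b (huS hb)
  refine ⟨b, hb, ?_, by linarith⟩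
  calc |c i - c b| = dist (c i) (c b) := (Real.dist_eq _ _).symm
    _ ≤ dist w (c i) + dist w (c b) := dist_triangle_left _ _ _
    _ < ρ i + ρ b := add_lt_add hwi hwb
    _ < 3 * ρ b := by linarith

def carlesonBox (a h : ℝ) : Set ℂ := {z : ℂ | z.re ∈ Ioo a (a + h) ∧ z.im ∈ Ioo 0 h}

theorem rect_subset_iUnion_carlesonBox (c ρ : ℝ) :
    {z : ℂ | z.re ∈ Ioo (c - 3 * ρ) (c + 3 * ρ) ∧ z.im ∈ Ioo 0 (2 * ρ)} ⊆
      ⋃ k : Fin 5, carlesonBox (c + ((k : ℕ) - 3) * ρ) (2 * ρ) := by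
  rintro z ⟨⟨hlo, hhi⟩, him⟩
  have hρ : 0 < ρ := by linarith [him.1, him.2]
  have hbox : ∀ k : Fin 5, c + ((k : ℕ) - 3) * ρ < z.re → z.re < c + ((k : ℕ) - 1) * ρ →
      z ∈ ⋃ k : Fin 5, carlesonBox (c + ((k : ℕ) - 3) * ρ) (2 * ρ) :=
    fun k h₁ h₂ => mem_iUnion.2 ⟨k, ⟨h₁, by linarith⟩, him⟩
  rcases lt_or_ge z.re (c - ρ) with h₁ | h₁
  · exact hbox 0 (by norm_num; linarith) (by norm_num; linarith)
  rcases lt_or_ge z.re c with h₂ | h₂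
  · exact hbox 1 (by norm_num; linarith) (by norm_num; linarith)
  rcases lt_or_ge z.re (c + ρ) with h₃ | h₃
  · exact hbox 2 (by norm_num; linarith) (by norm_num; linarith)
  rcases lt_or_ge z.re (c + 2 * ρ) with h₄ | h₄
  · exact hbox 3 (by norm_num; linarith) (by norm_num; linarith)
  · exact hbox 4 (by norm_num; linarith) (by norm_num; linarith)

section Carleson

variable {μ : Measure ℂ} {N : ℝ}

theorem measure_rect_le_of_carlesonBox_le
    (hCar : ∀ a h : ℝ, 0 < h → μ (carlesonBox a h) ≤ ENNReal.ofReal (N * h))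
    (c : ℝ) {ρ : ℝ} (hρ : 0 < ρ) :
    μ {z : ℂ | z.re ∈ Ioo (c - 3 * ρ) (c + 3 * ρ) ∧ z.im ∈ Ioo 0 (2 * ρ)} ≤
      ENNReal.ofReal (10 * N) * ENNReal.ofReal ρ := by
  calc _ ≤ ∑ k : Fin 5, μ (carlesonBox (c + ((k : ℕ) - 3) * ρ) (2 * ρ)) :=
        (measure_mono (rect_subset_iUnion_carlesonBox c ρ)).trans (measure_iUnion_fintype_le _ _)
    _ ≤ ∑ _k : Fin 5, ENNReal.ofReal (N * (2 * ρ)) :=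
        Finset.sum_le_sum fun k _ => hCar _ _ (by positivity)
    _ = ENNReal.ofReal (10 * N) * ENNReal.ofReal ρ := by
        rw [Finset.sum_const, Finset.card_univ, Fintype.card_fin, nsmul_eq_mul,
          ← ENNReal.ofReal_mul' hρ.le, ← ENNReal.ofReal_natCast, ← ENNReal.ofReal_mul (by norm_num)]
        ring_nf

theorem measure_le_of_le_lintegral_ball
    (hCar : ∀ a h : ℝ, 0 < h → μ (carlesonBox a h) ≤ ENNReal.ofReal (N * h))
    {F : ℝ → ℝ≥0∞} (hF : ∫⁻ t, F t ≠ ∞) {S : Set ℂ} {ρ : ℂ → ℝ}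
    (hρ : ∀ z ∈ S, 0 < z.im ∧ z.im ≤ ρ z ∧ ENNReal.ofReal (ρ z) ≤ ∫⁻ t in ball z.re (ρ z), F t) :
    μ S ≤ ENNReal.ofReal (10 * N) * ∫⁻ t, F t := by
  have hpos : ∀ z ∈ S, 0 < ρ z := fun z hz => (hρ z hz).1.trans_le (hρ z hz).2.1
  have hbdd : ∀ z ∈ S, ρ z ≤ (∫⁻ t, F t).toReal := fun z hz =>
    (ENNReal.ofReal_le_iff_le_toReal hF).1 ((hρ z hz).2.2.trans (setLIntegral_le_lintegral _ _))
  obtain ⟨u, huS, hu, hdisj, hnear⟩ := exists_disjoint_subfamily_near S Complex.re ρ hpos hbdd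
  have hcover : S ⊆ ⋃ b ∈ u,
      {z : ℂ | z.re ∈ Ioo (b.re - 3 * ρ b) (b.re + 3 * ρ b) ∧ z.im ∈ Ioo 0 (2 * ρ b)} := by
    intro z hz
    obtain ⟨b, hb, hre, hρb⟩ := hnear z hz
    obtain ⟨him, himρ, -⟩ := hρ z hz
    rw [abs_lt] at hre
    exact mem_biUnion hb ⟨⟨by linarith, by linarith⟩, him, himρ.trans_lt hρb⟩
  have : Countable u := hu.to_subtype
  calc μ S ≤ ∑' b : u, μ {z : ℂ | z.re ∈ Ioo ((b : ℂ).re - 3 * ρ b) ((b : ℂ).re + 3 * ρ b) ∧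
        z.im ∈ Ioo 0 (2 * ρ b)} := (measure_mono hcover).trans (measure_biUnion_le μ hu _)
    _ ≤ ∑' b : u, ENNReal.ofReal (10 * N) * ∫⁻ t in ball (b : ℂ).re (ρ b), F t :=
        ENNReal.tsum_le_tsum fun b => (measure_rect_le_of_carlesonBox_le hCar _
          (hpos b (huS b.2))).trans (by gcongr; exact (hρ b (huS b.2)).2.2)
    _ = ENNReal.ofReal (10 * N) * ∫⁻ t in ⋃ b : u, ball (b : ℂ).re (ρ b), F t := by
        rw [ENNReal.tsum_mul_left, lintegral_iUnion (fun _ => measurableSet_ball)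
          fun (b b' : u) hne => hdisj b.2 b'.2 (Subtype.coe_injective.ne hne)]
    _ ≤ ENNReal.ofReal (10 * N) * ∫⁻ t, F t := mul_le_mul_right (setLIntegral_le_lintegral _ _) _

end Carleson

theorem carleson_weak_L1_general (μ : Measure ℂ) (N : ℝ)
    (hCar : ∀ a h : ℝ, 0 < h →
      μ {z : ℂ | z.re ∈ Ioo a (a + h) ∧ z.im ∈ Ioo 0 h} ≤ ENNReal.ofReal (N * h))
    (f : ℝ → ℂ) (hf : Integrable f)
    (g : ℂ → ℂ)
    (hg : ∀ z : ℂ, 0 < z.im →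
      g z = ∫ t : ℝ, ((1 / Real.pi) * z.im / (z.im ^ 2 + (z.re - t) ^ 2) : ℝ) • f t)
    (lam : ℝ) (hlam : 0 < lam) :
    μ {z : ℂ | 0 < z.im ∧ lam < ‖g z‖}
      ≤ ENNReal.ofReal (10 * N * (∫ t : ℝ, ‖f t‖) / lam) := by
  set K : ℝ := 1 / 2 + 1 / Real.pi with hK_def
  have hK1 : K ≤ 1 := by linarith [one_div_le_one_div_of_le two_pos Real.two_le_pi]
  set c := ENNReal.ofReal (K / lam)
  have hc_lam : c * ENNReal.ofReal lam = ENNReal.ofReal K := by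
    rw [← ENNReal.ofReal_mul (by positivity), div_mul_cancel₀ _ hlam.ne']
  have hstop : ∀ z ∈ {z : ℂ | 0 < z.im ∧ lam < ‖g z‖}, ∃ r, 0 < z.im ∧ z.im ≤ r ∧
      ENNReal.ofReal r ≤ ∫⁻ t in ball z.re r, c * ‖f t‖ₑ := by
    rintro z ⟨hz, hgz⟩
    have hlt : ENNReal.ofReal K < c * ‖g z‖ₑ := by
      rw [← hc_lam]
      refine ENNReal.mul_lt_mul_right (by positivity) ENNReal.ofReal_ne_top ?_
      rwa [← ofReal_norm, ENNReal.ofReal_lt_ofReal_iff (hlam.trans hgz)]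
    rw [hg z hz] at hlt
    obtain ⟨r, hr, hball⟩ := HalfPlanePoisson.exists_lt_lintegral_ball_of_lt_enorm hf.1 hz z.re
      ENNReal.ofReal_ne_top hlt
    exact ⟨r, hz, hr, hball.le⟩
  choose! ρ hρ using hstop
  have hfin : ∫⁻ t, c * ‖f t‖ₑ ≠ ∞ := by
    rw [lintegral_const_mul' _ _ ENNReal.ofReal_ne_top]
    exact ENNReal.mul_ne_top ENNReal.ofReal_ne_top hf.2.ne
  calc _ ≤ ENNReal.ofReal (10 * N) * ∫⁻ t, c * ‖f t‖ₑ :=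
        measure_le_of_le_lintegral_ball hCar hfin hρ
    _ = ENNReal.ofReal (10 * N) * ENNReal.ofReal (K / lam * ∫ t, ‖f t‖) := by
        rw [lintegral_const_mul' _ _ ENNReal.ofReal_ne_top,
          ← ofReal_integral_norm_eq_lintegral_enorm hf, ← ENNReal.ofReal_mul (by positivity)]
    _ ≤ ENNReal.ofReal (10 * N) * ENNReal.ofReal ((∫ t, ‖f t‖) / lam) := by
        rw [div_mul_eq_mul_div]
        gcongr
        exact mul_le_of_le_one_left (integral_nonneg fun _ => norm_nonneg _) hK1
    _ = _ := by
        rw [← ENNReal.ofReal_mul' (by positivity), mul_div_assoc]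

theorem carleson_weak_L1 (μ : Measure ℂ) (N : ℝ) (hN : 0 ≤ N)
    (hsupp : μ {z : ℂ | z.im ≤ 0} = 0)
    (hCar : ∀ a h : ℝ, 0 < h →
      μ {z : ℂ | z.re ∈ Ioo a (a + h) ∧ z.im ∈ Ioo 0 h} ≤ ENNReal.ofReal (N * h))
    (f : ℝ → ℂ) (hf : Integrable f)
    (g : ℂ → ℂ)
    (hg : ∀ z : ℂ, 0 < z.im →
      g z = ∫ t : ℝ, ((1 / Real.pi) * z.im / (z.im ^ 2 + (z.re - t) ^ 2) : ℝ) • f t)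
    (lam : ℝ) (hlam : 0 < lam) :
    μ {z : ℂ | 0 < z.im ∧ lam < ‖g z‖}
      ≤ ENNReal.ofReal (10 * N * (∫ t : ℝ, ‖f t‖) / lam) :=
  carleson_weak_L1_general μ N hCar f hf g hg lam hlam
end
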